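/- arXiv:1911.00924 — 2 statements merged into one kernel-verified Lean document; each statement's English description precedes it below -/
import Mathlib

section
/- Let W be entrywise nonnegative with spectral radius less than 1, V := (1 - W)⁻¹, W̃ := W V, D := diag(V)⁻¹, and W̄ := W D V. Then W̄ ≤ W̃ entrywise, i.e., W̄_{ij} ≤ W̃_{ij} for all i, j. -/
/-!
Since the spectrum of `W` lies in the open unit disc, the Neumann series `∑ Wᵐ` converges to
`V = (1 - W)⁻¹`. Hence `V` is entrywise nonnegative and `V k k ≥ 1` (the `m = 0` term contributes
the identity), so every entry `(V k k)⁻¹` of `D` is at most `1`, and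
`(W D V) i j = ∑ₖ W i k (V k k)⁻¹ V k j ≤ ∑ₖ W i k V k j = (W V) i j`.
-/

open Matrix
open scoped NNReal ENNReal

theorem hasSum_pow_of_spectralRadius_lt_one {A : Type*} [NormedRing A] [NormedAlgebra ℂ A]
    [CompleteSpace A] {a : A} (h : spectralRadius ℂ a < 1) :
    HasSum (a ^ ·) (Ring.inverse (1 - a)) := by
  obtain ⟨r, hr1, hr⟩ : ∃ r : ℝ≥0, 1 < (r : ℝ≥0∞) ∧ (r : ℝ≥0∞) < (spectralRadius ℂ a)⁻¹ :=
    ENNReal.lt_iff_exists_nnreal_btwn.mp (ENNReal.one_lt_inv.mpr h)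
  -- `z ↦ (1 - z • a)⁻¹` is holomorphic on a disc of radius `r > 1`, with Taylor series `∑ zᵐ aᵐ`.
  have hseries := (spectrum.hasFPowerSeriesOnBall_inverse_one_sub_smul ℂ a).exchange_radius
    ((spectrum.differentiableOn_inverse_one_sub_smul hr).hasFPowerSeriesOnBall
      (by exact_mod_cast zero_lt_one.trans hr1))
  simpa using hseries.hasSum (y := 1) (by simpa using hr1)

namespace Matrix

variable {n : Type*} [Fintype n] [DecidableEq n]

theorem summable_pow_of_forall_norm_lt_one {A : Matrix n n ℂ}
    (h : ∀ μ ∈ spectrum ℂ A, ‖μ‖ < 1) : Summable (A ^ ·) := by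
  let : NormedRing (Matrix n n ℂ) := Matrix.linftyOpNormedRing
  let : NormedAlgebra ℂ (Matrix n n ℂ) := Matrix.linftyOpNormedAlgebra
  refine (hasSum_pow_of_spectralRadius_lt_one ?_).summable
  rcases subsingleton_or_nontrivial (Matrix n n ℂ) with _ | _
  · simp [spectrum.SpectralRadius.of_subsingleton]
  · exact_mod_cast spectrum.spectralRadius_lt_of_forall_lt A (r := 1) fun μ hμ => by
      simpa [← NNReal.coe_lt_coe] using h μ hμ

theorem summable_pow_of_summable_pow_map_ofReal {W : Matrix n n ℝ}
    (h : Summable ((W.map Complex.ofReal) ^ ·)) : Summable (W ^ ·) := by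
  have hre := h.map (Complex.reAddGroupHom.mapMatrix : Matrix n n ℂ →+ Matrix n n ℝ)
    (continuous_id.matrix_map Complex.continuous_re)
  convert hre using 2 with m
  change _ = (W.map Complex.ofRealHom ^ m).map _
  rw [← Matrix.map_pow, map_map]
  ext
  simp

theorem hasSum_pow_inv_one_sub {α : Type*} [CommRing α] [TopologicalSpace α]
    [IsTopologicalRing α] [T2Space α] {W : Matrix n n α} (h : Summable (W ^ ·)) :
    HasSum (W ^ ·) (1 - W)⁻¹ := by
  rw [inv_eq_right_inv h.one_sub_mul_tsum_pow]
  exact h.hasSum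

section OrderedSemiring

variable {α : Type*} [Semiring α] [PartialOrder α] [IsOrderedRing α] [TopologicalSpace α]
  [OrderClosedTopology α] {W V : Matrix n n α}

theorem apply_nonneg_of_hasSum_pow (hW : ∀ i j, 0 ≤ W i j) (h : HasSum (W ^ ·) V) (i j : n) :
    0 ≤ V i j :=
  (Pi.hasSum.mp (Pi.hasSum.mp h i) j).nonneg fun m => pow_apply_nonneg hW m i j

theorem one_le_apply_self_of_hasSum_pow (hW : ∀ i j, 0 ≤ W i j) (h : HasSum (W ^ ·) V) (i : n) :
    1 ≤ V i i := by
  simpa using le_hasSum (Pi.hasSum.mp (Pi.hasSum.mp h i) i) 0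
    fun m _ => pow_apply_nonneg hW m i i

end OrderedSemiring

theorem mul_diagonal_mul_apply_le {α : Type*} [Semiring α] [PartialOrder α] [IsOrderedRing α]
    {W V : Matrix n n α} {d : n → α} (hW : ∀ i j, 0 ≤ W i j) (hV : ∀ i j, 0 ≤ V i j)
    (hd : ∀ k, d k ≤ 1) (i j : n) : (W * diagonal d * V) i j ≤ (W * V) i j := by
  rw [mul_apply, mul_apply]
  refine Finset.sum_le_sum fun k _ => ?_
  calc (W * diagonal d) i k * V k j = W i k * d k * V k j := by rw [mul_diagonal]
    _ ≤ W i k * 1 * V k j :=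
      mul_le_mul_of_nonneg_right (mul_le_mul_of_nonneg_left (hd k) (hW i k)) (hV k j)
    _ = W i k * V k j := by rw [mul_one]

end Matrix

/-- Let `W` be entrywise nonnegative with spectral radius less than 1,
`V = (1 - W)⁻¹`, `W̃ = W * V`, `D = diag(V)⁻¹`, and `W̄ = W * D * V`.
Then `W̄ ≤ W̃` entrywise. -/
theorem bowtie_le_access_matrix {n : ℕ} (W : Matrix (Fin n) (Fin n) ℝ)
    (hpos : ∀ i j, 0 ≤ W i j)
    (hρ : ∀ μ ∈ spectrum ℂ (W.map (Complex.ofReal)), ‖μ‖ < 1)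
    (V D : Matrix (Fin n) (Fin n) ℝ)
    (hV : V = (1 - W)⁻¹)
    (hD : D = Matrix.diagonal (fun k => (V k k)⁻¹)) :
    ∀ i j, (W * D * V) i j ≤ (W * V) i j := by
  have hsum : HasSum (W ^ ·) V := hV ▸ hasSum_pow_inv_one_sub
    (summable_pow_of_summable_pow_map_ofReal (summable_pow_of_forall_norm_lt_one hρ))
  subst hD
  exact mul_diagonal_mul_apply_le hpos (apply_nonneg_of_hasSum_pow hpos hsum)
    fun k => inv_le_one_of_one_le₀ (one_le_apply_self_of_hasSum_pow hpos hsum k)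
end

section
/- Under the hypotheses that W is entrywise nonnegative with spectral radius less than 1 and v is an entrywise nonnegative vector, the bow-tie centrality ζ = W̄ v is bounded above componentwise by the access centrality χ = W̃ v, i.e., ζ_i ≤ χ_i for all i. -/
open Matrix Filter

attribute [local instance] Matrix.linftyOpNormedAddCommGroup Matrix.linftyOpNormedRing
  Matrix.linftyOpNormedAlgebra

private lemma matrix_complete {n : ℕ} : CompleteSpace (Matrix (Fin n) (Fin n) ℝ) :=
  FiniteDimensional.complete ℝ _

private lemma matrix_complete' {n : ℕ} : CompleteSpace (Matrix (Fin n) (Fin n) ℂ) :=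
  FiniteDimensional.complete ℂ _

attribute [local instance] matrix_complete matrix_complete'

private lemma neumann {n : ℕ} (hn : 0 < n) (A : Matrix (Fin n) (Fin n) ℝ)
    (h : ∀ μ ∈ spectrum ℂ (A.map Complex.ofReal), ‖μ‖ < 1) :
    ∃ S : Matrix (Fin n) (Fin n) ℝ, (1 - A)⁻¹ = S ∧
      ∀ i j, HasSum (fun k => (A ^ k) i j) (S i j) := by
  haveI : Nonempty (Fin n) := ⟨⟨0, hn⟩⟩
  set M := A.map Complex.ofReal with hM
  have hρ : spectralRadius ℂ M < 1 := by
    have := spectrum.spectralRadius_lt_of_forall_lt (r := 1) M (fun z hz => by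
      simpa [← NNReal.coe_lt_coe] using h z hz)
    simpa using this
  obtain ⟨r, hρr, hr1⟩ := ENNReal.lt_iff_exists_nnreal_btwn.mp hρ
  have hr1' : (r : ℝ) < 1 := by exact_mod_cast hr1
  -- eventual bound on norms
  have hG := spectrum.pow_nnnorm_pow_one_div_tendsto_nhds_spectralRadius M
  have hev := hG.eventually_lt_const hρr
  have hmap : ∀ k : ℕ, M ^ k = (A ^ k).map Complex.ofReal := fun k => by
    exact ((RingHom.mapMatrix (Complex.ofRealHom) (m := Fin n)).map_pow A k).symm
  have hnn : ∀ k : ℕ, ‖M ^ k‖₊ = ‖A ^ k‖₊ := fun k => by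
    rw [hmap]; simp [Matrix.linfty_opNNNorm_def, Matrix.map_apply]
  have hbound : ∀ᶠ k in atTop, ‖A ^ k‖ ≤ (r : ℝ) ^ k := by
    filter_upwards [hev, eventually_ge_atTop 1] with k hk hk1
    have hk0 : (k : ℝ) ≠ 0 := by positivity
    have : ((‖M ^ k‖₊ : ENNReal) ^ (1 / (k : ℝ))) ^ (k : ℝ) ≤ (r : ENNReal) ^ (k : ℝ) :=
      ENNReal.rpow_le_rpow hk.le (by positivity)
    rw [← ENNReal.rpow_mul, one_div, inv_mul_cancel₀ hk0, ENNReal.rpow_one] at this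
    have h2 : (‖M ^ k‖₊ : ENNReal) ≤ ((r ^ (k:ℝ) : NNReal) : ENNReal) := by
      rwa [ENNReal.coe_rpow_of_nonneg _ (by positivity)]
    have h3 : ‖M ^ k‖₊ ≤ r ^ (k : ℝ) := by exact_mod_cast h2
    have h4 : ‖A ^ k‖ ≤ ((r : ℝ)) ^ (k : ℝ) := by
      rw [← coe_nnnorm (A ^ k), ← hnn k, ← NNReal.coe_rpow]
      exact_mod_cast h3
    rwa [Real.rpow_natCast] at h4
  have hsum : Summable (fun k => A ^ k) :=
    Summable.of_norm_bounded_eventually (summable_geometric_of_lt_one r.2 hr1') (by rw [Nat.cofinite_eq_atTop]; exact hbound)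
  have hA0 : Tendsto (fun k => A ^ k) atTop (nhds 0) := by
    refine squeeze_zero_norm' hbound ?_
    exact tendsto_pow_atTop_nhds_zero_of_lt_one r.2 hr1'
  set S := ∑' k, A ^ k with hS
  have hHS : HasSum (fun k => A ^ k) S := hsum.hasSum
  -- telescoping
  have h1 : ∀ N, (∑ i ∈ Finset.range N, A ^ i) * (1 - A) = 1 - A ^ N := by
    intro N
    have hg := geom_sum_mul A N
    rw [mul_sub, mul_one] at hg ⊢
    rw [sub_eq_iff_eq_add] at hg
    rw [hg]; abel
  have hlim1 : Tendsto (fun N => (∑ i ∈ Finset.range N, A ^ i) * (1 - A)) atTop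
      (nhds (S * (1 - A))) := hHS.tendsto_sum_nat.mul tendsto_const_nhds
  have hlim2 : Tendsto (fun N => (1 : Matrix (Fin n) (Fin n) ℝ) - A ^ N) atTop (nhds 1) := by
    simpa using tendsto_const_nhds.sub hA0
  have hSinv : S * (1 - A) = 1 := by
    refine tendsto_nhds_unique ?_ hlim2
    simpa only [h1] using hlim1
  refine ⟨S, Matrix.inv_eq_left_inv hSinv, fun i j => ?_⟩
  let e : Matrix (Fin n) (Fin n) ℝ →ₗ[ℝ] ℝ :=
    { toFun := fun B => B i j, map_add' := fun _ _ => rfl, map_smul' := fun _ _ => rfl }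
  have econt : Continuous e := e.continuous_of_finiteDimensional
  exact hHS.map e.toAddMonoidHom econt


/-- For `W` entrywise nonnegative with spectral radius less than 1 and `v`
entrywise nonnegative, the bow-tie centrality `ζ = (W * D * V) *ᵥ v` is bounded
above componentwise by the access centrality `χ = (W * V) *ᵥ v`. -/
theorem bowtie_centrality_le_access_centrality {n : ℕ}
    (W : Matrix (Fin n) (Fin n) ℝ) (v : Fin n → ℝ)
    (hpos : ∀ i j, 0 ≤ W i j)
    (hρ : ∀ μ ∈ spectrum ℂ (W.map (Complex.ofReal)), ‖μ‖ < 1)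
    (hv : ∀ i, 0 ≤ v i)
    (V D : Matrix (Fin n) (Fin n) ℝ)
    (hV : V = (1 - W)⁻¹)
    (hD : D = Matrix.diagonal (fun k => (V k k)⁻¹)) :
    ∀ i, ((W * D * V) *ᵥ v) i ≤ ((W * V) *ᵥ v) i := by
  rcases Nat.eq_zero_or_pos n with hn | hn
  · subst hn; exact fun i => i.elim0
  obtain ⟨S, hSV, hS⟩ := neumann hn W hρ
  have hpow : ∀ (k : ℕ) (i j : Fin n), 0 ≤ (W ^ k) i j := by
    intro k
    induction k with
    | zero => intro i j; by_cases h : i = j <;> simp [h, Matrix.one_apply]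
    | succ k ih =>
      intro i j
      rw [pow_succ, Matrix.mul_apply]
      exact Finset.sum_nonneg fun c _ => mul_nonneg (ih i c) (hpos c j)
  have hVS : V = S := by rw [hV, hSV]
  have hVnn : ∀ i j, 0 ≤ V i j := fun i j =>
    (hVS ▸ hS i j).nonneg (fun k => hpow k i j)
  have hVdiag : ∀ k, 1 ≤ V k k := by
    intro k
    have := le_hasSum (hVS ▸ hS k k) 0 (fun j _ => hpow j k k)
    simpa using this
  have hdle : ∀ k, (V k k)⁻¹ ≤ 1 := fun k =>
    inv_le_one_of_one_le₀ (hVdiag k)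
  have hdnn : ∀ k, 0 ≤ (V k k)⁻¹ := fun k =>
    inv_nonneg.mpr (le_trans zero_le_one (hVdiag k))
  intro i
  simp only [Matrix.mulVec, dotProduct]
  refine Finset.sum_le_sum fun j _ => mul_le_mul_of_nonneg_right ?_ (hv j)
  rw [hD, Matrix.mul_assoc, Matrix.mul_apply, Matrix.mul_apply]
  refine Finset.sum_le_sum fun k _ => ?_
  rw [Matrix.diagonal_mul]
  have : (V k k)⁻¹ * V k j ≤ V k j := by
    nlinarith [hVnn k j, hdle k, hdnn k]
  exact mul_le_mul_of_nonneg_left this (hpos i k)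
end
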